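/- arXiv:1812.10867 — 10 statements merged into one kernel-verified Lean document; each statement's English description precedes it below -/
import Mathlib

section
/- Let m ≤ n and let a, b be real n×m matrices of full rank m. Then a^T a = b^T b if and only if there exists an orthogonal matrix z ∈ O(n) such that a = z b. -/
/-!
If `aᴴ a = bᴴ b`, the linear maps `x ↦ a x` and `x ↦ b x` preserve the same inner products, so
`b x ↦ a x` is a well-defined linear isometry from the range of `b` into the ambient space. Any
linear isometry defined on a subspace of a finite-dimensional inner product space extends to the
whole space, and the matrix of that extension is the unitary `z` with `a = z b`.
-/

open Matrix

namespace LinearMap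

variable {𝕜 E V : Type*} [RCLike 𝕜] [AddCommGroup E] [Module 𝕜 E]
  [NormedAddCommGroup V] [InnerProductSpace 𝕜 V]

theorem ker_le_ker_of_inner_eq {f g : E →ₗ[𝕜] V}
    (h : ∀ x y, inner 𝕜 (f x) (f y) = inner 𝕜 (g x) (g y)) : ker g ≤ ker f := by
  intro x hx
  rw [mem_ker] at hx ⊢
  rw [← inner_self_eq_zero (𝕜 := 𝕜), h, hx, inner_zero_left]

theorem exists_linearIsometry_comp_eq_of_inner_eq [FiniteDimensional 𝕜 V] {f g : E →ₗ[𝕜] V}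
    (h : ∀ x y, inner 𝕜 (f x) (f y) = inner 𝕜 (g x) (g y)) :
    ∃ U : V →ₗᵢ[𝕜] V, U.toLinearMap ∘ₗ g = f := by
  let L : range g →ₗ[𝕜] V := (ker g).liftQ f (ker_le_ker_of_inner_eq h) ∘ₗ g.quotKerEquivRange.symm
  have hL : ∀ x, L ⟨g x, mem_range_self g x⟩ = f x := fun x => by
    simp [L, quotKerEquivRange_symm_apply_image]
  have hL_inner : ∀ u v : range g, inner 𝕜 (L u) (L v) = inner 𝕜 u v := by
    rintro ⟨_, x, rfl⟩ ⟨_, y, rfl⟩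
    rw [hL, hL, h]
    rfl
  refine ⟨(L.isometryOfInner hL_inner).extend, LinearMap.ext fun x => ?_⟩
  exact ((L.isometryOfInner hL_inner).extend_apply ⟨g x, mem_range_self g x⟩).trans (hL x)

end LinearMap

namespace Matrix

variable {𝕜 m n : Type*} [RCLike 𝕜] [Fintype m] [DecidableEq m] [Fintype n] [DecidableEq n]

theorem inner_toEuclideanLin_toEuclideanLin (a : Matrix m n 𝕜) (x y : EuclideanSpace 𝕜 n) :
    inner 𝕜 (toEuclideanLin a x) (toEuclideanLin a y) = inner 𝕜 x (toEuclideanLin (aᴴ * a) y) := by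
  rw [toLpLin_mul 2 2 2, toEuclideanLin_conjTranspose_eq_adjoint, LinearMap.comp_apply,
    LinearMap.adjoint_inner_right]

theorem toEuclideanLin_symm_mem_unitaryGroup (U : EuclideanSpace 𝕜 n →ₗᵢ[𝕜] EuclideanSpace 𝕜 n) :
    toEuclideanLin.symm U.toLinearMap ∈ unitaryGroup n 𝕜 := by
  rw [mem_unitaryGroup_iff', star_eq_conjTranspose]
  apply toEuclideanLin.injective
  rw [toLpLin_mul 2 2 2, toEuclideanLin_conjTranspose_eq_adjoint, LinearEquiv.apply_symm_apply,
    LinearIsometry.adjoint_comp_self', toLpLin_one]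

theorem conjTranspose_mul_self_eq_iff_exists_mem_unitaryGroup {a b : Matrix m n 𝕜} :
    aᴴ * a = bᴴ * b ↔ ∃ z ∈ unitaryGroup m 𝕜, a = z * b := by
  constructor
  · intro hab
    have h_inner : ∀ x y, inner 𝕜 (toEuclideanLin a x) (toEuclideanLin a y) =
        inner 𝕜 (toEuclideanLin b x) (toEuclideanLin b y) := fun x y => by
      rw [inner_toEuclideanLin_toEuclideanLin, inner_toEuclideanLin_toEuclideanLin, hab]
    obtain ⟨U, hU⟩ := LinearMap.exists_linearIsometry_comp_eq_of_inner_eq h_inner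
    refine ⟨_, toEuclideanLin_symm_mem_unitaryGroup U, toEuclideanLin.injective ?_⟩
    rw [toLpLin_mul 2 2 2, LinearEquiv.apply_symm_apply, hU]
  · rintro ⟨z, hz, rfl⟩
    rw [conjTranspose_mul, Matrix.mul_assoc, ← Matrix.mul_assoc zᴴ, ← star_eq_conjTranspose,
      mem_unitaryGroup_iff'.mp hz, Matrix.one_mul]

end Matrix

theorem stmt_0_general {n m : ℕ} (a b : Matrix (Fin n) (Fin m) ℝ) :
    aᵀ * a = bᵀ * b ↔ ∃ z ∈ Matrix.orthogonalGroup (Fin n) ℝ, a = z * b := by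
  simpa only [conjTranspose_eq_transpose_of_trivial] using
    conjTranspose_mul_self_eq_iff_exists_mem_unitaryGroup (a := a) (b := b)

/-- For full-rank real `n × m` matrices `a, b` (with `m ≤ n`),
`aᵀ a = bᵀ b` iff `a = z b` for some orthogonal `z ∈ O(n)`. -/
theorem stmt_0 {n m : ℕ} (hmn : m ≤ n) (a b : Matrix (Fin n) (Fin m) ℝ)
    (ha : a.rank = m) (hb : b.rank = m) :
    aᵀ * a = bᵀ * b ↔ ∃ z ∈ Matrix.orthogonalGroup (Fin n) ℝ, a = z * b :=
  stmt_0_general a b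
end

section
/- Let a be a full-rank n×m real matrix (m ≤ n), let u, v be n×m real matrices, and let c ∈ GL(m). Then tr(uc ((ac)^T(ac))^{-1} (vc)^T) √det((ac)^T(ac)) = |det(c)| · tr(u (a^T a)^{-1} v^T) √det(a^T a). -/
open Matrix

/-- transformation of the metric under right multiplication by
`c ∈ GL(m)`: it scales by `|det c|`. -/
theorem stmt_2 {n m : ℕ} (hmn : m ≤ n) (a u v : Matrix (Fin n) (Fin m) ℝ)
    (ha : a.rank = m) (c : Matrix (Fin m) (Fin m) ℝ) (hc : IsUnit c.det) :
    Matrix.trace ((u * c) * ((a * c)ᵀ * (a * c))⁻¹ * (v * c)ᵀ) *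
        Real.sqrt (((a * c)ᵀ * (a * c)).det)
      = |c.det| * (Matrix.trace (u * (aᵀ * a)⁻¹ * vᵀ) * Real.sqrt ((aᵀ * a).det)) := by
  have hct : IsUnit cᵀ.det := by rwa [Matrix.det_transpose]
  have hinv : ((a * c)ᵀ * (a * c))⁻¹ = c⁻¹ * (aᵀ * a)⁻¹ * cᵀ⁻¹ := by
    rw [Matrix.transpose_mul]
    rw [show cᵀ * aᵀ * (a * c) = (cᵀ * (aᵀ * a)) * c by simp [Matrix.mul_assoc]]
    rw [Matrix.mul_inv_rev, Matrix.mul_inv_rev, Matrix.mul_assoc]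
  have htr : Matrix.trace ((u * c) * ((a * c)ᵀ * (a * c))⁻¹ * (v * c)ᵀ)
      = Matrix.trace (u * (aᵀ * a)⁻¹ * vᵀ) := by
    rw [hinv, Matrix.transpose_mul]
    rw [show u * c * (c⁻¹ * (aᵀ * a)⁻¹ * cᵀ⁻¹) * (cᵀ * vᵀ)
        = u * (c * c⁻¹) * ((aᵀ * a)⁻¹ * ((cᵀ⁻¹ * cᵀ) * vᵀ)) by simp [Matrix.mul_assoc]]
    rw [Matrix.mul_nonsing_inv c hc, Matrix.nonsing_inv_mul cᵀ hct]
    simp [Matrix.mul_assoc]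
  have hdet : ((a * c)ᵀ * (a * c)).det = c.det ^ 2 * (aᵀ * a).det := by
    rw [Matrix.transpose_mul,
      show cᵀ * aᵀ * (a * c) = (cᵀ * (aᵀ * a)) * c by simp [Matrix.mul_assoc],
      Matrix.det_mul, Matrix.det_mul, Matrix.det_transpose]
    ring
  rw [htr, hdet, Real.sqrt_mul (sq_nonneg _), Real.sqrt_sq_eq_abs]
  ring
end

section
/- Let a be a full-rank n×m real matrix with m ≤ n, and let L be any n×n matrix of the form L = b a^+ for some n×m matrix b, where a^+ = (a^T a)^{-1} a^T. Then (tr L)^2 ≤ m · tr(L^T L), with equality if and only if b = c a for some real scalar c. -/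
/-!
`P = a a⁺` is the orthogonal projection onto the column space of `a`: it is symmetric,
idempotent, of trace `m`, and `L P = L`. Hence `tr L = tr (Pᵀ L)` is the Frobenius inner
product of `P` and `L`, and the inequality is Cauchy–Schwarz with `‖P‖² = tr P = m`.
Concretely, `R = (tr P) L - (tr L) P` satisfies `tr (Rᵀ R) = tr P · (tr P · tr (Lᵀ L) - (tr L)²)`,
so equality forces `R = 0`, i.e. `L = c P`, which is the same as `b = c a` because `a⁺ a = 1`.
-/

open Matrix

namespace Matrix

variable {ι κ : Type*} [Fintype ι] [Fintype κ]

lemma trace_transpose_mul_self_nonneg (A : Matrix κ ι ℝ) : 0 ≤ (Aᵀ * A).trace := by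
  simpa only [conjTranspose_eq_transpose_of_trivial] using
    (posSemidef_conjTranspose_mul_self A).trace_nonneg

lemma trace_transpose_mul_self_eq_zero_iff {A : Matrix κ ι ℝ} : (Aᵀ * A).trace = 0 ↔ A = 0 := by
  rw [← conjTranspose_eq_transpose_of_trivial, trace_conjTranspose_mul_self_eq_zero_iff]

section Projection

variable {P L : Matrix ι ι ℝ}

lemma trace_transpose_mul_eq_trace_of_mul_eq_self (hPt : Pᵀ = P) (hLP : L * P = L) :
    (Pᵀ * L).trace = L.trace := by
  rw [hPt, trace_mul_comm, hLP]

lemma eq_zero_of_mul_eq_self_of_trace_eq_zero (hPt : Pᵀ = P) (hPP : P * P = P) (hLP : L * P = L)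
    (hP : P.trace = 0) : L = 0 := by
  have : P = 0 := trace_transpose_mul_self_eq_zero_iff.mp (by rw [hPt, hPP, hP])
  rw [← hLP, this, Matrix.mul_zero]

lemma trace_transpose_mul_self_smul_sub_smul (hPt : Pᵀ = P) (hPP : P * P = P)
    (hLP : L * P = L) :
    ((P.trace • L - L.trace • P)ᵀ * (P.trace • L - L.trace • P)).trace =
      P.trace * (P.trace * (Lᵀ * L).trace - L.trace ^ 2) := by
  have hPL := trace_transpose_mul_eq_trace_of_mul_eq_self hPt hLP
  have hLP' : (Lᵀ * P).trace = L.trace := by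
    rw [← trace_transpose, transpose_mul, transpose_transpose, hPL]
  have hPP' : (Pᵀ * P).trace = P.trace := by rw [hPt, hPP]
  simp only [transpose_sub, transpose_smul, sub_mul, mul_sub, smul_mul, Matrix.mul_smul, trace_sub,
    trace_smul, smul_eq_mul, hPL, hLP', hPP']
  ring

theorem sq_trace_le_of_mul_eq_self (hPt : Pᵀ = P) (hPP : P * P = P) (hLP : L * P = L) :
    L.trace ^ 2 ≤ P.trace * (Lᵀ * L).trace := by
  have hP : 0 ≤ P.trace := by simpa only [hPt, hPP] using trace_transpose_mul_self_nonneg P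
  rcases hP.eq_or_lt with hP | hP
  · simp [eq_zero_of_mul_eq_self_of_trace_eq_zero hPt hPP hLP hP.symm]
  · have := trace_transpose_mul_self_smul_sub_smul hPt hPP hLP ▸
      trace_transpose_mul_self_nonneg (P.trace • L - L.trace • P)
    linarith [(mul_nonneg_iff_of_pos_left hP).mp this]

theorem sq_trace_eq_iff_of_mul_eq_self (hPt : Pᵀ = P) (hPP : P * P = P) (hLP : L * P = L) :
    L.trace ^ 2 = P.trace * (Lᵀ * L).trace ↔ ∃ c : ℝ, L = c • P := by
  constructor
  · intro h
    by_cases hP : P.trace = 0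
    · exact ⟨0, by rw [eq_zero_of_mul_eq_self_of_trace_eq_zero hPt hPP hLP hP, zero_smul]⟩
    have hR : P.trace • L - L.trace • P = 0 := by
      rw [← trace_transpose_mul_self_eq_zero_iff,
        trace_transpose_mul_self_smul_sub_smul hPt hPP hLP, h, sub_self, mul_zero]
    refine ⟨L.trace / P.trace, ?_⟩
    rw [sub_eq_zero] at hR
    rw [div_eq_inv_mul, mul_smul, ← hR, smul_smul, inv_mul_cancel₀ hP, one_smul]
  · rintro ⟨c, rfl⟩
    rw [transpose_smul, smul_mul, Matrix.mul_smul, hPt, hPP]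
    simp only [trace_smul, smul_eq_mul]
    ring

end Projection

lemma mul_eq_smul_mul_iff {m n R : Type*} [Fintype m] [Fintype n] [DecidableEq m] [CommRing R]
    {a b : Matrix n m R} {A : Matrix m n R} (hAa : A * a = 1) (c : R) :
    b * A = c • (a * A) ↔ b = c • a := by
  refine ⟨fun h ↦ ?_, fun h ↦ by rw [h, smul_mul]⟩
  simpa only [Matrix.mul_assoc, hAa, Matrix.mul_one, smul_mul] using congrArg (· * a) h

lemma isUnit_det_of_rank_eq_card {m K : Type*} [Fintype m] [DecidableEq m] [Field K]
    {M : Matrix m m K} (h : M.rank = Fintype.card m) : IsUnit M.det := by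
  rw [← isUnit_iff_isUnit_det, ← mulVec_surjective_iff_isUnit, ← coe_mulVecLin,
    ← LinearMap.range_eq_top]
  apply Submodule.eq_top_of_finrank_eq
  rwa [Module.finrank_fintype_fun_eq_card]

end Matrix

theorem stmt_4_general {n m : ℕ} (a b : Matrix (Fin n) (Fin m) ℝ)
    (ha : a.rank = m)
    (L : Matrix (Fin n) (Fin n) ℝ) (hL : L = b * ((aᵀ * a)⁻¹ * aᵀ)) :
    (Matrix.trace L) ^ 2 ≤ (m : ℝ) * Matrix.trace (Lᵀ * L) ∧
    ((Matrix.trace L) ^ 2 = (m : ℝ) * Matrix.trace (Lᵀ * L) ↔ ∃ c : ℝ, b = c • a) := by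
  set A := (aᵀ * a)⁻¹ * aᵀ
  have hAa : A * a = 1 := by
    rw [Matrix.mul_assoc, nonsing_inv_mul _ (isUnit_det_of_rank_eq_card (by
      rw [rank_transpose_mul_self, ha, Fintype.card_fin]))]
  have hPt : (a * A)ᵀ = a * A := by
    simp only [A, transpose_mul, transpose_transpose, transpose_nonsing_inv, Matrix.mul_assoc]
  have hPP : a * A * (a * A) = a * A := by
    rw [Matrix.mul_assoc, ← Matrix.mul_assoc A, hAa, Matrix.one_mul]
  have hLP : L * (a * A) = L := by
    rw [hL, Matrix.mul_assoc, ← Matrix.mul_assoc A, hAa, Matrix.one_mul]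
  have htr : (a * A).trace = m := by
    rw [trace_mul_comm, hAa, trace_one, Fintype.card_fin]
  rw [← htr, sq_trace_eq_iff_of_mul_eq_self hPt hPP hLP, hL]
  exact ⟨hL ▸ sq_trace_le_of_mul_eq_self hPt hPP hLP, exists_congr (mul_eq_smul_mul_iff hAa)⟩

/-- For `L = b a⁺` with `a` full rank, `(tr L)² ≤ m tr(Lᵀ L)`,
with equality iff `b = c • a` for some scalar `c`. -/
theorem stmt_4 {n m : ℕ} (hmn : m ≤ n) (a b : Matrix (Fin n) (Fin m) ℝ)
    (ha : a.rank = m)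
    (L : Matrix (Fin n) (Fin n) ℝ) (hL : L = b * ((aᵀ * a)⁻¹ * aᵀ)) :
    (Matrix.trace L) ^ 2 ≤ (m : ℝ) * Matrix.trace (Lᵀ * L) ∧
    ((Matrix.trace L) ^ 2 = (m : ℝ) * Matrix.trace (Lᵀ * L) ↔ ∃ c : ℝ, b = c • a) :=
  stmt_4_general a b ha L hL
end

section
/- Let a be a full rank n×m real matrix (m ≤ n). Then there exist z ∈ O(n) and a symmetric positive definite m×m matrix s such that a equals z times the n×m matrix whose top m×m block is s and whose remaining (n−m)×m block is zero. -/
/-!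
Polar decomposition. Full column rank makes `aᴴ * a` positive definite; if `s` is its positive
square root, then `q = a * s⁻¹` satisfies `qᴴ * q = s⁻¹ (aᴴ a) s⁻¹ = 1`, i.e. has orthonormal
columns. Completing these columns to an orthonormal basis gives a unitary `z` whose first `m`
columns are those of `q`, so `a = q * s = z * [s; 0]`.
-/

open Matrix

namespace Matrix

theorem mulVec_injective_of_rank_eq_card {m n K : Type*} [Fintype n] [Field K]
    {A : Matrix m n K} (hA : A.rank = Fintype.card n) : Function.Injective A.mulVec :=
  mulVec_injective_iff.mpr <| linearIndependent_iff_card_eq_finrank_span.mpr <| by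
    rw [Set.finrank, ← rank_eq_finrank_span_cols, hA]

def padZeroRows {R o : Type*} [Zero R] {m : ℕ} (n : ℕ) (s : Matrix (Fin m) o R) :
    Matrix (Fin n) o R :=
  of fun i j => if h : (i : ℕ) < m then s ⟨i, h⟩ j else 0

theorem mul_padZeroRows {R l o : Type*} [NonUnitalNonAssocSemiring R] {m n : ℕ} (hmn : m ≤ n)
    (z : Matrix l (Fin n) R) (s : Matrix (Fin m) o R) :
    z * padZeroRows n s = z.submatrix id (Fin.castLE hmn) * s := by
  ext i j
  refine (Fintype.sum_of_injective (Fin.castLE hmn) (Fin.castLE_injective hmn) _ _ ?_ ?_).symm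
  · rintro k hk
    have : ¬ (k : ℕ) < m := fun h => hk ⟨⟨k, h⟩, rfl⟩
    simp [padZeroRows, this]
  · intro k
    simp [padZeroRows]

variable {𝕜 : Type*} [RCLike 𝕜] {m n : Type*} [DecidableEq m] [Fintype n]

open scoped MatrixOrder ComplexOrder in
theorem exists_conjTranspose_mul_self_eq_one_and_eq_mul_posDef [Fintype m] {a : Matrix n m 𝕜}
    (ha : Function.Injective a.mulVec) :
    ∃ q : Matrix n m 𝕜, qᴴ * q = 1 ∧ ∃ s : Matrix m m 𝕜, s.PosDef ∧ a = q * s := by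
  have hg : (aᴴ * a).PosDef := .conjTranspose_mul_self a ha
  set s := CFC.sqrt (aᴴ * a)
  have hs : s.PosDef := (IsStrictlyPositive.sqrt _ hg.isStrictlyPositive).posDef
  have hss : s * s = aᴴ * a := CFC.sqrt_mul_sqrt_self _ hg.posSemidef.nonneg
  have hu : IsUnit s.det := (isUnit_iff_isUnit_det s).mp hs.isUnit
  refine ⟨a * s⁻¹, ?_, s, hs, by rw [Matrix.mul_assoc, nonsing_inv_mul _ hu, Matrix.mul_one]⟩
  calc (a * s⁻¹)ᴴ * (a * s⁻¹) = s⁻¹ * (aᴴ * a) * s⁻¹ := by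
        rw [conjTranspose_mul, hs.inv.isHermitian.eq]
        simp only [Matrix.mul_assoc]
    _ = 1 := by
        rw [← hss, ← Matrix.mul_assoc, nonsing_inv_mul _ hu, Matrix.one_mul, mul_nonsing_inv _ hu]

theorem exists_mem_unitaryGroup_submatrix_eq [DecidableEq n] {q : Matrix n m 𝕜}
    (hq : qᴴ * q = 1) (e : m ↪ n) :
    ∃ z ∈ unitaryGroup n 𝕜, z.submatrix id e = q := by
  let col : m → EuclideanSpace 𝕜 n := fun j => WithLp.toLp 2 (qᵀ j)
  have hcol : Orthonormal 𝕜 col := by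
    rw [← gram_eq_one_iff_orthonormal, gram_eq_conjTranspose_mul (EuclideanSpace.basisFun n 𝕜)]
    exact hq
  let v : n → EuclideanSpace 𝕜 n := Function.extend e col 0
  have hv : Orthonormal 𝕜 ((Set.range e).domRestrict v) := by
    convert hcol.comp _ (Equiv.ofInjective e e.injective).symm.injective
    ext ⟨_, j, rfl⟩ : 1
    simp [v, e.injective.extend_apply]
  obtain ⟨b, hb⟩ := hv.exists_orthonormalBasis_extension_of_card_eq (by simp)
  refine ⟨(EuclideanSpace.basisFun n 𝕜).toBasis.toMatrix b,
    (EuclideanSpace.basisFun n 𝕜).toMatrix_orthonormalBasis_mem_unitary b, ?_⟩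
  ext i j
  rw [submatrix_apply, id, Module.Basis.toMatrix_apply, hb (e j) ⟨j, rfl⟩]
  simp [v, e.injective.extend_apply, col]

end Matrix

/-- Every full-rank `n × m` real matrix `a` (with `m ≤ n`) can be
written as `a = z * (s stacked over 0)` with `z ∈ O(n)` and `s` symmetric
positive definite `m × m`. -/
theorem stmt_5 {n m : ℕ} (hmn : m ≤ n) (a : Matrix (Fin n) (Fin m) ℝ)
    (ha : a.rank = m) :
    ∃ z ∈ Matrix.orthogonalGroup (Fin n) ℝ, ∃ s : Matrix (Fin m) (Fin m) ℝ,
      s.PosDef ∧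
      a = z * Matrix.of (fun (i : Fin n) (j : Fin m) =>
        if h : (i : ℕ) < m then s ⟨(i : ℕ), h⟩ j else 0) := by
  obtain ⟨q, hq, s, hs, rfl⟩ := exists_conjTranspose_mul_self_eq_one_and_eq_mul_posDef
    (mulVec_injective_of_rank_eq_card (by rwa [Fintype.card_fin]))
  obtain ⟨z, hz, rfl⟩ := exists_mem_unitaryGroup_submatrix_eq hq (Fin.castLEEmb hmn)
  exact ⟨z, hz, s, hs, (mul_padZeroRows hmn z s).symm⟩
end

section
/- Let a be a full-rank n×m matrix (m ≤ n), and let v be an n×m matrix such that v a^+ is a symmetric n×n matrix, where a^+ = (a^T a)^{-1} a^T. Then for every skew-symmetric n×n matrix X, tr(X a (a^T a)^{-1} v^T) = 0. Conversely, if tr(X a (a^T a)^{-1} v^T) = 0 for all skew-symmetric X, then v a^+ is symmetric. That is, the horizontal space at a for the submersion a ↦ a^T a consists exactly of those v with v a^+ symmetric. -/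
open Matrix

lemma aux_trace_mul_transpose_self_eq_zero {n : ℕ} (X : Matrix (Fin n) (Fin n) ℝ)
    (h : Matrix.trace (X * Xᵀ) = 0) : X = 0 := by
  have hsum : ∑ i, ∑ j, X i j ^ 2 = 0 := by
    simpa [Matrix.trace, Matrix.diag, Matrix.mul_apply, sq] using h
  ext i j
  have h1 := (Finset.sum_eq_zero_iff_of_nonneg
    (fun i _ => Finset.sum_nonneg (fun j _ => sq_nonneg (X i j)))).mp hsum i (Finset.mem_univ i)
  have h2 := (Finset.sum_eq_zero_iff_of_nonneg
    (fun j _ => sq_nonneg (X i j))).mp h1 j (Finset.mem_univ j)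
  simpa using pow_eq_zero_iff (n := 2) (by norm_num) |>.mp h2

/-- `v` is horizontal at `a` (i.e. `v a⁺` is symmetric) iff `v`
is orthogonal, w.r.t. the metric `⟨u,w⟩_a = tr(u (aᵀa)⁻¹ wᵀ)√det(aᵀa)`, to
every vertical vector `X a` with `X` skew-symmetric. -/
theorem stmt_6 {n m : ℕ} (hmn : m ≤ n) (a v : Matrix (Fin n) (Fin m) ℝ)
    (ha : a.rank = m) :
    (v * ((aᵀ * a)⁻¹ * aᵀ))ᵀ = v * ((aᵀ * a)⁻¹ * aᵀ) ↔
      ∀ X : Matrix (Fin n) (Fin n) ℝ, Xᵀ = -X →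
        Matrix.trace ((X * a) * (aᵀ * a)⁻¹ * vᵀ) * Real.sqrt ((aᵀ * a).det) = 0 := by
  set B := (aᵀ * a)⁻¹ with hB
  have hrank : (aᵀ * a).rank = m := by rw [Matrix.rank_transpose_mul_self, ha]
  -- aᵀ * a is invertible
  have hU : IsUnit (aᵀ * a) := by
    apply Matrix.mulVec_surjective_iff_isUnit.mp
    have hr : LinearMap.range (aᵀ * a).mulVecLin = ⊤ := by
      apply Submodule.eq_top_of_finrank_eq
      simpa [Matrix.rank] using hrank
    intro y
    obtain ⟨x, hx⟩ := LinearMap.range_eq_top.mp hr y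
    exact ⟨x, hx⟩
  -- symmetry of B
  have hBsym : Bᵀ = B := by
    rw [hB, Matrix.transpose_nonsing_inv, Matrix.transpose_mul, Matrix.transpose_transpose]
  -- positive determinant
  have hPSD : (aᵀ * a).PosSemidef := by
    simpa using Matrix.posSemidef_conjTranspose_mul_self a
  have hdetnn : 0 ≤ (aᵀ * a).det := by
    rw [hPSD.isHermitian.det_eq_prod_eigenvalues]
    exact Finset.prod_nonneg fun i _ => hPSD.eigenvalues_nonneg i
  have hdetpos : 0 < (aᵀ * a).det :=
    lt_of_le_of_ne hdetnn (Ne.symm ((Matrix.isUnit_iff_isUnit_det _).mp hU).ne_zero)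
  have hsqrt : Real.sqrt ((aᵀ * a).det) ≠ 0 :=
    (Real.sqrt_pos.mpr hdetpos).ne'
  have hTr : ∀ X : Matrix (Fin n) (Fin n) ℝ,
      Matrix.trace ((X * a) * B * vᵀ) = Matrix.trace (X * (a * B * vᵀ)) := by
    intro X; rw [Matrix.mul_assoc, Matrix.mul_assoc, Matrix.mul_assoc]
  have hTsym : (v * (B * aᵀ))ᵀ = a * B * vᵀ := by
    rw [Matrix.transpose_mul, Matrix.transpose_mul, Matrix.transpose_transpose, hBsym,
      Matrix.mul_assoc]
  set T := a * B * vᵀ with hT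
  constructor
  · intro hsym X hX
    apply mul_eq_zero_of_left
    rw [hTr]
    have hTsym2 : Tᵀ = T := by
      rw [← hTsym, Matrix.transpose_transpose, hsym]
    have : Matrix.trace (X * T) = - Matrix.trace (X * T) := by
      conv_lhs => rw [← Matrix.trace_transpose, Matrix.transpose_mul, hTsym2, hX,
        Matrix.mul_neg, Matrix.trace_neg, Matrix.trace_mul_comm]
    linarith
  · intro h
    have h' : ∀ X : Matrix (Fin n) (Fin n) ℝ, Xᵀ = -X → Matrix.trace (X * T) = 0 := by
      intro X hX
      have := h X hX
      rw [hTr] at this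
      exact (mul_eq_zero.mp this).resolve_right hsqrt
    set X := T - Tᵀ with hXdef
    have hXskew : Xᵀ = -X := by
      rw [hXdef, Matrix.transpose_sub, Matrix.transpose_transpose, neg_sub]
    have h1 : Matrix.trace (X * T) = 0 := h' X hXskew
    have h2 : Matrix.trace (X * Tᵀ) = 0 := by
      rw [← Matrix.trace_transpose, Matrix.transpose_mul, Matrix.transpose_transpose,
        hXskew, Matrix.mul_neg, Matrix.trace_neg, Matrix.trace_mul_comm, h1, neg_zero]
    have hmul : X * X = X * T - X * Tᵀ := by rw [hXdef, Matrix.mul_sub]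
    have h3 : Matrix.trace (X * Xᵀ) = 0 := by
      rw [hXskew, Matrix.mul_neg, Matrix.trace_neg, hmul, Matrix.trace_sub, h1, h2]
      ring
    have hX0 : X = 0 := aux_trace_mul_transpose_self_eq_zero X h3
    have hTT : T = Tᵀ := by
      have := sub_eq_zero.mp (hXdef ▸ hX0)
      exact this
    rw [hTsym]
    have hv : v * (B * aᵀ) = Tᵀ := by rw [← hTsym, Matrix.transpose_transpose]
    rw [hv]
    exact hTT
end

section
/- Let a be a full-rank n×m real matrix (m ≤ n) and let v be an n×m matrix such that V = v a^+ is symmetric, where a^+ = (a^T a)^{-1} a^T. Set dπ_a(v) = a^T v + v^T a and g = a^T a. Then (1/4) tr(g^{-1}(a^T v + v^T a) g^{-1}(a^T v + v^T a)) √det(g) = tr(V V^T) √det(g). That is, the differential of π(a) = a^T a is an isometry from the horizontal space onto the tangent space of Sym_+(m) with the scaled Ebin metric ⟨h,k⟩_g = (1/4) tr(h g^{-1} k g^{-1}) √det(g). -/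
open Matrix

lemma aux_isUnit_det {m : ℕ} (B : Matrix (Fin m) (Fin m) ℝ) (h : B.rank = m) :
    IsUnit B.det := by
  rw [isUnit_iff_ne_zero]
  intro hdet
  obtain ⟨w, hw0, hw⟩ := (Matrix.exists_mulVec_eq_zero_iff).mpr hdet
  have hrange : LinearMap.range B.mulVecLin = ⊤ := by
    apply Submodule.eq_top_of_finrank_eq
    rw [← Matrix.rank, h]
    simp
  have hsurj : Function.Surjective B.mulVecLin := LinearMap.range_eq_top.mp hrange
  have hinj : Function.Injective B.mulVecLin :=
    (LinearMap.injective_iff_surjective).mpr hsurj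
  apply hw0
  apply hinj
  simpa [Matrix.mulVecLin_apply] using hw

/-- For a horizontal vector `v` at a full-rank `a` (i.e. `V = v a⁺`
symmetric), the differential `dπ_a(v) = aᵀ v + vᵀ a` of `π(a) = aᵀ a` satisfies
`⟨dπ_a(v), dπ_a(v)⟩^Sym_{aᵀa} = tr(V Vᵀ)√det(aᵀa) = ⟨v,v⟩_a`. -/
theorem stmt_7 {n m : ℕ} (hmn : m ≤ n) (a v : Matrix (Fin n) (Fin m) ℝ)
    (ha : a.rank = m)
    (hV : (v * ((aᵀ * a)⁻¹ * aᵀ))ᵀ = v * ((aᵀ * a)⁻¹ * aᵀ)) :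
    (1 / 4) * Matrix.trace ((aᵀ * a)⁻¹ * (aᵀ * v + vᵀ * a) * (aᵀ * a)⁻¹ * (aᵀ * v + vᵀ * a)) *
        Real.sqrt ((aᵀ * a).det)
      = Matrix.trace ((v * ((aᵀ * a)⁻¹ * aᵀ)) * (v * ((aᵀ * a)⁻¹ * aᵀ))ᵀ) *
        Real.sqrt ((aᵀ * a).det) := by
  have hdet : IsUnit (aᵀ * a).det := by
    apply aux_isUnit_det
    rw [Matrix.rank_transpose_mul_self, ha]
  set g : Matrix (Fin m) (Fin m) ℝ := aᵀ * a with hg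
  have hginv : g⁻¹ * g = 1 := Matrix.nonsing_inv_mul g hdet
  have hgsymm : gᵀ = g := by rw [hg]; simp [Matrix.transpose_mul]
  have hginvsymm : (g⁻¹)ᵀ = g⁻¹ := by
    rw [Matrix.transpose_nonsing_inv, hgsymm]
  -- hV rewritten: a * (g⁻¹ * vᵀ) = v * (g⁻¹ * aᵀ)
  have hV' : a * (g⁻¹ * vᵀ) = v * (g⁻¹ * aᵀ) := by
    have h := hV
    rw [Matrix.transpose_mul, Matrix.transpose_mul, Matrix.transpose_transpose,
      hginvsymm] at h
    calc a * (g⁻¹ * vᵀ) = a * g⁻¹ * vᵀ := by rw [Matrix.mul_assoc]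
    _ = v * (g⁻¹ * aᵀ) := h
  -- v = a * (g⁻¹ * vᵀ) * a
  have hv : a * (g⁻¹ * vᵀ) * a = v := by
    rw [hV']
    calc v * (g⁻¹ * aᵀ) * a = v * (g⁻¹ * (aᵀ * a)) := by
          rw [Matrix.mul_assoc, Matrix.mul_assoc]
    _ = v := by rw [← hg, hginv, Matrix.mul_one]
  -- aᵀ v = vᵀ a
  have h1 : aᵀ * v = vᵀ * a := by
    calc aᵀ * v = aᵀ * (a * (g⁻¹ * vᵀ) * a) := by rw [hv]
    _ = (aᵀ * a) * (g⁻¹ * vᵀ) * a := by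
          simp only [Matrix.mul_assoc]
    _ = g * (g⁻¹ * vᵀ) * a := by rw [← hg]
    _ = vᵀ * a := by
          rw [← Matrix.mul_assoc g, Matrix.mul_nonsing_inv g hdet, Matrix.one_mul]
  -- now reduce to trace identity
  congr 1
  rw [hV, ← h1]
  have expand : g⁻¹ * (aᵀ * v + aᵀ * v) * g⁻¹ * (aᵀ * v + aᵀ * v)
      = (4 : ℝ) • (g⁻¹ * (aᵀ * v) * g⁻¹ * (aᵀ * v)) := by
    rw [show aᵀ * v + aᵀ * v = (2:ℝ) • (aᵀ * v) from (two_smul ℝ _).symm]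
    simp only [Matrix.mul_smul, Matrix.smul_mul, smul_smul]
    norm_num
  rw [expand, Matrix.trace_smul]
  have cyc : ((g⁻¹ * (aᵀ * v) * g⁻¹ * (aᵀ * v)).trace : ℝ)
      = ((v * (g⁻¹ * aᵀ)) * (v * (g⁻¹ * aᵀ))).trace := by
    rw [show g⁻¹ * (aᵀ * v) * g⁻¹ * (aᵀ * v) = (g⁻¹ * aᵀ) * (v * (g⁻¹ * aᵀ) * v) by
      simp only [Matrix.mul_assoc]]
    rw [Matrix.trace_mul_comm]
    simp only [Matrix.mul_assoc]
  rw [cyc, smul_eq_mul]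
  ring
end

section
/- Let a : ℝ → M_+(n,m) be a smooth curve of full-rank n×m matrices satisfying the geodesic equation a'' = a'(a^Ta)^{-1}(a')^T a + a'(a^Ta)^{-1}a^T a' − a(a^Ta)^{-1}(a')^T a' + (1/2) tr(a'(a^Ta)^{-1}(a')^T) a − tr(a'(a^Ta)^{-1}a^T) a'. Then L := a' a^+ (with a^+ = (a^Ta)^{-1}a^T) satisfies L' + tr(L) L + (L^T L − L L^T) − (1/2) tr(L^T L) a a^+ = 0. -/
open Matrix

attribute [local instance] Matrix.frobeniusNormedAddCommGroup Matrix.frobeniusNormedSpace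

noncomputable section

/-- Moore-Penrose pseudoinverse of a full-rank `n × m` matrix. -/
def aplus {n m : ℕ} (a : Matrix (Fin n) (Fin m) ℝ) : Matrix (Fin m) (Fin n) ℝ :=
  (aᵀ * a)⁻¹ * aᵀ

/-- Right-hand side of the geodesic equation `a_tt = geoRHS (a, a_t)` of the
metric `⟨u,v⟩_a = tr(u (aᵀa)⁻¹ vᵀ)√det(aᵀa)` on full-rank `n × m` matrices. -/
def geoRHS {n m : ℕ} (x v : Matrix (Fin n) (Fin m) ℝ) : Matrix (Fin n) (Fin m) ℝ :=
  v * (xᵀ * x)⁻¹ * vᵀ * x + v * (xᵀ * x)⁻¹ * xᵀ * v - x * (xᵀ * x)⁻¹ * vᵀ * v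
    + ((1 / 2) * Matrix.trace (v * (xᵀ * x)⁻¹ * vᵀ)) • x
    - (Matrix.trace (v * (xᵀ * x)⁻¹ * xᵀ)) • v


/-!
Write `P = a a⁺` and `L = a' a⁺`. For full column rank the pseudoinverse has the
Golub–Pereyra derivative `(a⁺)' = -a⁺ a' a⁺ + a⁺ a⁺ᵀ a'ᵀ (1 - P)`, so
`L' = a'' a⁺ - L² + L Lᵀ (1 - P)`. Substituting the geodesic equation, every term of `a'' a⁺`
is a polynomial in `L`, `Lᵀ` and `P`:
`a'' a⁺ = L Lᵀ P + L² - Lᵀ L + ½ tr(Lᵀ L) P - tr(L) L`,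
and the terms `L²` and `L Lᵀ P` cancel.
-/

section Calculus

variable {𝕜 : Type*} [NontriviallyNormedField 𝕜] [CompleteSpace 𝕜] {l m n : Type*} [Fintype l]
  [Fintype m] [Fintype n] {t : 𝕜}

theorem HasDerivAt.matrix_mul {A : 𝕜 → Matrix l m 𝕜} {B : 𝕜 → Matrix m n 𝕜}
    {A' : Matrix l m 𝕜} {B' : Matrix m n 𝕜} (hA : HasDerivAt A A' t) (hB : HasDerivAt B B' t) :
    HasDerivAt (fun s => A s * B s) (A' * B t + A t * B') t := by
  rw [add_comm]
  exact (mulLinearMap 𝕜 : Matrix l m 𝕜 →ₗ[𝕜] _ →ₗ[𝕜] Matrix l n 𝕜).toContinuousBilinearMap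
    |>.hasDerivAt_of_bilinear (fun _ => hA) (fun _ => hB)

theorem HasDerivAt.matrix_transpose {A : 𝕜 → Matrix m n 𝕜} {A' : Matrix m n 𝕜}
    (hA : HasDerivAt A A' t) : HasDerivAt (fun s => (A s)ᵀ) A'ᵀ t :=
  (transposeLinearEquiv m n 𝕜 𝕜).toLinearMap.toContinuousLinearMap.hasFDerivAt.comp_hasDerivAt
    t hA

end Calculus

open scoped Matrix.Norms.Frobenius in
theorem HasDerivAt.matrix_inv {𝕜 n : Type*} [RCLike 𝕜] [Fintype n] [DecidableEq n] {t : 𝕜}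
    {G : 𝕜 → Matrix n n 𝕜} {G' : Matrix n n 𝕜}
    (hG : HasDerivAt G G' t) (hu : IsUnit (G t)) :
    HasDerivAt (fun s => (G s)⁻¹) (-((G t)⁻¹ * G' * (G t)⁻¹)) t := by
  have hinv : (G t)⁻¹ = ↑hu.unit⁻¹ := by
    rw [nonsing_inv_eq_ringInverse, ← Ring.inverse_unit, hu.unit_spec]
  rw [hinv]
  simp only [nonsing_inv_eq_ringInverse]
  exact (hasFDerivAt_ringInverse (𝕜 := 𝕜) hu.unit).comp_hasDerivAt t hG

section Rank

variable {m n : Type*} [Fintype m] [Fintype n] [DecidableEq n]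

theorem Matrix.isUnit_of_rank_eq_card {K : Type*} [Field K] {A : Matrix n n K}
    (h : A.rank = Fintype.card n) : IsUnit A := by
  rw [← mulVec_surjective_iff_isUnit]
  change Function.Surjective A.mulVecLin
  rw [← LinearMap.range_eq_top]
  apply Submodule.eq_top_of_finrank_eq
  rw [← rank, h, Module.finrank_fintype_fun_eq_card]

theorem Matrix.isUnit_transpose_mul_self {R : Type*} [Field R] [LinearOrder R]
    [IsStrictOrderedRing R] {A : Matrix m n R} (h : A.rank = Fintype.card n) :
    IsUnit (Aᵀ * A) :=
  isUnit_of_rank_eq_card (by rw [rank_transpose_mul_self, h])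

end Rank

section Pseudoinverse

variable {n m : ℕ} {x v : Matrix (Fin n) (Fin m) ℝ}

theorem aplus_transpose (x : Matrix (Fin n) (Fin m) ℝ) : (aplus x)ᵀ = x * (xᵀ * x)⁻¹ := by
  rw [aplus, transpose_mul, transpose_transpose, transpose_nonsing_inv, transpose_mul,
    transpose_transpose]

theorem aplus_mul_self (hx : IsUnit (xᵀ * x)) : aplus x * x = 1 := by
  rw [aplus, Matrix.mul_assoc, nonsing_inv_mul _ ((isUnit_iff_isUnit_det _).mp hx)]

theorem aplus_mul_aplus_transpose (hx : IsUnit (xᵀ * x)) :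
    aplus x * (aplus x)ᵀ = (xᵀ * x)⁻¹ := by
  rw [aplus_transpose, ← Matrix.mul_assoc, aplus_mul_self hx, Matrix.one_mul]

theorem hasDerivAt_aplus {a : ℝ → Matrix (Fin n) (Fin m) ℝ} {a' : Matrix (Fin n) (Fin m) ℝ}
    {t : ℝ} (ha : HasDerivAt a a' t) (hu : IsUnit ((a t)ᵀ * a t)) :
    HasDerivAt (fun s => aplus (a s))
      (-(aplus (a t) * a' * aplus (a t))
        + aplus (a t) * (aplus (a t))ᵀ * a'ᵀ * (1 - a t * aplus (a t))) t := by
  rw [aplus_mul_aplus_transpose hu]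
  refine (((ha.matrix_transpose.matrix_mul ha).matrix_inv hu).matrix_mul
    ha.matrix_transpose).congr_deriv ?_
  simp only [aplus, Matrix.add_mul, Matrix.mul_add, Matrix.neg_mul, Matrix.mul_sub,
    Matrix.mul_one, Matrix.mul_assoc]
  abel

theorem geoRHS_mul_aplus (hx : IsUnit (xᵀ * x)) :
    geoRHS x v * aplus x =
      v * aplus x * (v * aplus x)ᵀ * (x * aplus x) + v * aplus x * (v * aplus x)
        - (v * aplus x)ᵀ * (v * aplus x)
        + ((1 / 2) * trace ((v * aplus x)ᵀ * (v * aplus x))) • (x * aplus x)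
        - trace (v * aplus x) • (v * aplus x) := by
  have hLLt : v * (xᵀ * x)⁻¹ * vᵀ = v * aplus x * (v * aplus x)ᵀ := by
    rw [transpose_mul, ← aplus_mul_aplus_transpose hx]
    simp only [Matrix.mul_assoc]
  rw [trace_mul_comm, geoRHS, hLLt, transpose_mul, aplus_transpose]
  simp only [aplus, Matrix.mul_assoc, Matrix.sub_mul, Matrix.add_mul, Matrix.smul_mul]

end Pseudoinverse

theorem stmt_8_general {n m : ℕ} (a a' : ℝ → Matrix (Fin n) (Fin m) ℝ)
    (hrank : ∀ t, (a t).rank = m)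
    (hda : ∀ t, HasDerivAt a (a' t) t)
    (hgeo : ∀ t, HasDerivAt a' (geoRHS (a t) (a' t)) t)
    (L : ℝ → Matrix (Fin n) (Fin n) ℝ)
    (hL : ∀ t, L t = a' t * aplus (a t)) :
    ∀ t, HasDerivAt L
      (-((Matrix.trace (L t)) • L t + ((L t)ᵀ * L t - L t * (L t)ᵀ)
          - ((1 / 2) * Matrix.trace ((L t)ᵀ * L t)) • (a t * aplus (a t)))) t := by
  intro t
  obtain rfl : L = fun s => a' s * aplus (a s) := funext hL
  have hu : IsUnit ((a t)ᵀ * a t) :=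
    isUnit_transpose_mul_self ((hrank t).trans (Fintype.card_fin m).symm)
  refine ((hgeo t).matrix_mul (hasDerivAt_aplus (hda t) hu)).congr_deriv ?_
  rw [geoRHS_mul_aplus hu]
  simp only [Matrix.mul_add, Matrix.mul_neg, Matrix.mul_sub, Matrix.mul_one, transpose_mul,
    Matrix.mul_assoc]
  module

/-- if `a` solves the geodesic equation, then `L = a' a⁺`
solves `L' + tr(L) L + (Lᵀ L - L Lᵀ) - (1/2) tr(Lᵀ L) a a⁺ = 0`. -/
theorem stmt_8 {n m : ℕ} (hmn : m ≤ n) (a a' : ℝ → Matrix (Fin n) (Fin m) ℝ)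
    (hrank : ∀ t, (a t).rank = m)
    (hda : ∀ t, HasDerivAt a (a' t) t)
    (hgeo : ∀ t, HasDerivAt a' (geoRHS (a t) (a' t)) t)
    (L : ℝ → Matrix (Fin n) (Fin n) ℝ)
    (hL : ∀ t, L t = a' t * aplus (a t)) :
    ∀ t, HasDerivAt L
      (-((Matrix.trace (L t)) • L t + ((L t)ᵀ * L t - L t * (L t)ᵀ)
          - ((1 / 2) * Matrix.trace ((L t)ᵀ * L t)) • (a t * aplus (a t)))) t :=
  stmt_8_general a a' hrank hda hgeo L hL

end
end

section
/- Let L : ℝ → M(n,n) solve L' + tr(L) L + (L^T L − L L^T) − (1/2) tr(L^T L) a a^+ = 0 along a curve a with a' = L a and L a a^+ = L. Define τ(t) = tr(L(t)) and δ(t) = tr(L(t)^T L(t)). Then τ' + τ² − (m/2) δ = 0 and δ' + τ δ = 0; consequently τ(t) = f'(t)/f(t) and δ(t) = δ(0)/f(t) where f(t) = (m δ(0)/4) t² + τ(0) t + 1 (as long as f > 0). -/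
/-!
Taking traces in the reduced geodesic equation, with `tr (a a⁺) = m`, `(a a⁺)ᵀ = a a⁺` and
`L a a⁺ = L`, gives the Riccati system `τ' = (m/2) δ - τ²`, `δ' = -τ δ`. The integrating factor
`g = exp ∫₀ᵗ τ` linearises it: `(δ g)' = 0` and `(g τ)' = (m/2) δ g = (m/2) δ₀`, so `g = f`,
whence `τ f = f'` and `δ f = δ₀` for all `t`.
-/

open Matrix

attribute [local instance] Matrix.frobeniusNormedAddCommGroup Matrix.frobeniusNormedSpace

noncomputable section

theorem eq_of_hasDerivAt_eq {E : Type*} [NormedAddCommGroup E] [NormedSpace ℝ E]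
    {f g f' : ℝ → E} (hf : ∀ t, HasDerivAt f (f' t) t)
    (hg : ∀ t, HasDerivAt g (f' t) t) (t₀ : ℝ) (h : f t₀ = g t₀) : f = g :=
  eq_of_fderiv_eq (fun t => (hf t).differentiableAt) (fun t => (hg t).differentiableAt)
    (fun t => by rw [(hf t).hasFDerivAt.fderiv, (hg t).hasFDerivAt.fderiv]) t₀ h

theorem riccati_closed_form {c : ℝ} {τ δ : ℝ → ℝ}
    (hτ : ∀ t, HasDerivAt τ (c * δ t - τ t ^ 2) t)
    (hδ : ∀ t, HasDerivAt δ (-(τ t * δ t)) t) (t : ℝ) :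
    τ t * (c * δ 0 / 2 * t ^ 2 + τ 0 * t + 1) = c * δ 0 * t + τ 0 ∧
      δ t * (c * δ 0 / 2 * t ^ 2 + τ 0 * t + 1) = δ 0 := by
  have hτc : Continuous τ := continuous_iff_continuousAt.2 fun t => (hτ t).continuousAt
  set g : ℝ → ℝ := fun t => Real.exp (∫ s in (0)..t, τ s)
  have hg : ∀ t, HasDerivAt g (g t * τ t) t := fun t =>
    (hτc.integral_hasStrictDerivAt 0 t).hasDerivAt.exp
  have hg0 : g 0 = 1 := by simp [g]
  have hδg : ∀ t, δ t * g t = δ 0 := congrFun <|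
    eq_of_hasDerivAt_eq (f' := fun _ => 0)
      (fun t => ((hδ t).mul (hg t)).congr_deriv (by ring))
      (fun t => hasDerivAt_const t _) 0 (by simp [hg0])
  have hgτ : ∀ t, g t * τ t = c * δ 0 * t + τ 0 := congrFun <|
    eq_of_hasDerivAt_eq (f' := fun _ => c * δ 0)
      (fun t => ((hg t).mul (hτ t)).congr_deriv (by linear_combination c * hδg t))
      (fun t => (((hasDerivAt_id t).const_mul (c * δ 0)).add_const (τ 0)).congr_deriv
        (mul_one _))
      0 (by simp [hg0])
  have hgf : ∀ t, g t = c * δ 0 / 2 * t ^ 2 + τ 0 * t + 1 := congrFun <|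
    eq_of_hasDerivAt_eq (f' := fun t => c * δ 0 * t + τ 0)
      (fun t => (hg t).congr_deriv (hgτ t))
      (fun t => ((((hasDerivAt_pow 2 t).const_mul (c * δ 0 / 2)).add
          ((hasDerivAt_id t).const_mul (τ 0))).add_const 1).congr_deriv (by push_cast; ring))
      0 (by simp [hg0])
  rw [← hgf t]
  exact ⟨by linear_combination hgτ t, hδg t⟩

theorem Matrix.isUnit_det_of_rank_eq_card_s9 {ι K : Type*} [Fintype ι] [DecidableEq ι] [Field K]
    {A : Matrix ι ι K} (h : A.rank = Fintype.card ι) : IsUnit A.det := by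
  rw [← isUnit_iff_isUnit_det, ← mulVec_surjective_iff_isUnit, ← coe_mulVecLin,
    ← LinearMap.range_eq_top]
  exact Submodule.eq_top_of_finrank_eq (by rwa [Module.finrank_fintype_fun_eq_card])

theorem trace_mul_aplus {n m : ℕ} {a : Matrix (Fin n) (Fin m) ℝ} (h : a.rank = m) :
    (a * aplus a).trace = m := by
  have hU : IsUnit (aᵀ * a).det :=
    isUnit_det_of_rank_eq_card_s9 (by rw [rank_transpose_mul_self, h, Fintype.card_fin])
  rw [trace_mul_comm, aplus, Matrix.mul_assoc, nonsing_inv_mul _ hU, trace_one, Fintype.card_fin]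

theorem transpose_mul_aplus {n m : ℕ} (a : Matrix (Fin n) (Fin m) ℝ) :
    (a * aplus a)ᵀ = a * aplus a := by
  rw [aplus, transpose_mul, transpose_mul, transpose_nonsing_inv, transpose_mul,
    transpose_transpose, Matrix.mul_assoc]

section ReducedGeodesic

variable {ι : Type*} [Fintype ι]

/-- The reduced geodesic equation reads `L' = reducedGeodesicField L (a a⁺)`. -/
def reducedGeodesicField (L P : Matrix ι ι ℝ) : Matrix ι ι ℝ :=
  -(L.trace • L + (Lᵀ * L - L * Lᵀ) - (1 / 2 * (Lᵀ * L).trace) • P)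

theorem trace_reducedGeodesicField {L P : Matrix ι ι ℝ} {k : ℝ} (hP : P.trace = k) :
    (reducedGeodesicField L P).trace = k / 2 * (Lᵀ * L).trace - L.trace ^ 2 := by
  simp only [reducedGeodesicField, trace_neg, trace_add, trace_sub, trace_smul, smul_eq_mul,
    trace_mul_comm L Lᵀ, hP]
  ring

theorem trace_transpose_mul_reducedGeodesicField {L P : Matrix ι ι ℝ} (hP : Pᵀ = P)
    (hLP : L * P = L) :
    ((reducedGeodesicField L P)ᵀ * L + Lᵀ * reducedGeodesicField L P).trace =
      -(L.trace * (Lᵀ * L).trace) := by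
  have hLtP : (Lᵀ * P).trace = L.trace := by
    rw [← hP, ← transpose_mul, trace_transpose, trace_mul_comm, hLP]
  have hcube : (Lᵀ * (Lᵀ * L)).trace = (Lᵀ * (L * Lᵀ)).trace := by
    rw [trace_mul_comm, Matrix.mul_assoc]
  rw [trace_add, ← trace_transpose (_ᵀ * L), transpose_mul, transpose_transpose, ← two_mul]
  simp only [reducedGeodesicField, Matrix.mul_neg, Matrix.mul_add, Matrix.mul_sub,
    Matrix.mul_smul, trace_neg, trace_add, trace_sub, trace_smul, smul_eq_mul, hcube, hLtP]
  ring

end ReducedGeodesic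

attribute [local instance] Matrix.frobeniusNormedRing Matrix.frobeniusNormedAlgebra

theorem HasDerivAt.matrix_trace {ι : Type*} [Fintype ι] {L : ℝ → Matrix ι ι ℝ}
    {L' : Matrix ι ι ℝ} {t : ℝ} (h : HasDerivAt L L' t) :
    HasDerivAt (fun s => (L s).trace) L'.trace t :=
  (traceLinearMap ι ℝ ℝ).toContinuousLinearMap.hasFDerivAt.comp_hasDerivAt t h

theorem HasDerivAt.matrix_transpose_s9 {ι κ : Type*} [Fintype ι] [Fintype κ]
    {L : ℝ → Matrix ι κ ℝ} {L' : Matrix ι κ ℝ} {t : ℝ} (h : HasDerivAt L L' t) :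
    HasDerivAt (fun s => (L s)ᵀ) L'ᵀ t :=
  (transposeLinearEquiv ι κ ℝ ℝ).toLinearMap.toContinuousLinearMap.hasFDerivAt.comp_hasDerivAt
    t h

theorem stmt_9_general {n m : ℕ}
    (a : ℝ → Matrix (Fin n) (Fin m) ℝ) (L : ℝ → Matrix (Fin n) (Fin n) ℝ)
    (hrank : ∀ t, (a t).rank = m)
    (hLa : ∀ t, L t * (a t * aplus (a t)) = L t)
    (hode : ∀ t, HasDerivAt L
      (-((Matrix.trace (L t)) • L t + ((L t)ᵀ * L t - L t * (L t)ᵀ)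
          - ((1 / 2) * Matrix.trace ((L t)ᵀ * L t)) • (a t * aplus (a t)))) t)
    (tau dlt f : ℝ → ℝ)
    (htau : ∀ t, tau t = Matrix.trace (L t))
    (hdlt : ∀ t, dlt t = Matrix.trace ((L t)ᵀ * L t))
    (hf : ∀ t, f t = ((m : ℝ) * dlt 0 / 4) * t ^ 2 + tau 0 * t + 1) :
    (∀ t, HasDerivAt tau (((m : ℝ) / 2) * dlt t - tau t ^ 2) t) ∧
    (∀ t, HasDerivAt dlt (-(tau t * dlt t)) t) ∧
    (∀ t, (∀ s ∈ Set.uIcc (0 : ℝ) t, 0 < f s) →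
      tau t * f t = ((m : ℝ) * dlt 0 / 2) * t + tau 0 ∧ dlt t * f t = dlt 0) := by
  obtain rfl : tau = fun t => (L t).trace := funext htau
  obtain rfl : dlt = fun t => ((L t)ᵀ * L t).trace := funext hdlt
  have hL : ∀ t, HasDerivAt L (reducedGeodesicField (L t) (a t * aplus (a t))) t := hode
  have hτ : ∀ t, HasDerivAt (fun s => (L s).trace)
      ((m : ℝ) / 2 * ((L t)ᵀ * L t).trace - (L t).trace ^ 2) t := fun t =>
    (hL t).matrix_trace.congr_deriv (trace_reducedGeodesicField (trace_mul_aplus (hrank t)))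
  have hδ : ∀ t, HasDerivAt (fun s => ((L s)ᵀ * L s).trace)
      (-((L t).trace * ((L t)ᵀ * L t).trace)) t := fun t =>
    ((hL t).matrix_transpose_s9.mul (hL t)).matrix_trace.congr_deriv
      (trace_transpose_mul_reducedGeodesicField (transpose_mul_aplus _) (hLa t))
  refine ⟨hτ, hδ, fun t _ => ?_⟩
  obtain ⟨hτf, hδf⟩ := riccati_closed_form hτ hδ t
  rw [hf]
  exact ⟨by linear_combination hτf, by linear_combination hδf⟩

/-- along a solution of the reduced geodesic equation,
`τ = tr L` and `δ = tr(Lᵀ L)` satisfy `τ' + τ² - (m/2)δ = 0`, `δ' + τδ = 0`,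
and hence `τ = f'/f`, `δ = δ₀/f` on the interval where `f > 0`, with
`f t = (m δ₀ / 4) t² + τ₀ t + 1`. -/
theorem stmt_9 {n m : ℕ} (hmn : m ≤ n)
    (a : ℝ → Matrix (Fin n) (Fin m) ℝ) (L : ℝ → Matrix (Fin n) (Fin n) ℝ)
    (hrank : ∀ t, (a t).rank = m)
    (hda : ∀ t, HasDerivAt a (L t * a t) t)
    (hLa : ∀ t, L t * (a t * aplus (a t)) = L t)
    (hode : ∀ t, HasDerivAt L
      (-((Matrix.trace (L t)) • L t + ((L t)ᵀ * L t - L t * (L t)ᵀ)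
          - ((1 / 2) * Matrix.trace ((L t)ᵀ * L t)) • (a t * aplus (a t)))) t)
    (tau dlt f : ℝ → ℝ)
    (htau : ∀ t, tau t = Matrix.trace (L t))
    (hdlt : ∀ t, dlt t = Matrix.trace ((L t)ᵀ * L t))
    (hf : ∀ t, f t = ((m : ℝ) * dlt 0 / 4) * t ^ 2 + tau 0 * t + 1) :
    (∀ t, HasDerivAt tau (((m : ℝ) / 2) * dlt t - tau t ^ 2) t) ∧
    (∀ t, HasDerivAt dlt (-(tau t * dlt t)) t) ∧
    (∀ t, (∀ s ∈ Set.uIcc (0 : ℝ) t, 0 < f s) →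
      tau t * f t = ((m : ℝ) * dlt 0 / 2) * t + tau 0 ∧ dlt t * f t = dlt 0) :=
  stmt_9_general a L hrank hLa hode tau dlt f htau hdlt hf
end
end

section
/- Let m ≥ 2, a ∈ M_+(n,m), and let u, v be tangent vectors at a such that U = u a^+ and V = v a^+ are symmetric n×n matrices. Then the sectional curvature of the plane spanned by u and v for the metric ⟨u,v⟩_a = tr(u(a^Ta)^{-1}v^T)√det(a^Ta) is non-positive; concretely, with U₀, V₀ the traceless parts of U, V, one has 7 tr([U₀,V₀]²) + m((tr(U₀V₀))² − tr(U₀²) tr(V₀²)) ≤ 0. -/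
open Matrix

noncomputable section

lemma trace_mul_symm {n : ℕ} (A B : Matrix (Fin n) (Fin n) ℝ) (hB : Bᵀ = B) :
    Matrix.trace (A * B) = ∑ i, ∑ j, A i j * B i j := by
  simp only [Matrix.trace, Matrix.diag, Matrix.mul_apply]
  refine Finset.sum_congr rfl fun i _ => Finset.sum_congr rfl fun j _ => ?_
  rw [show B j i = Bᵀ i j from rfl, hB]

/-- for `m ≥ 2` and horizontal tangent vectors `u, v` at `a`
(i.e. `U = u a⁺`, `V = v a⁺` symmetric), the sectional curvature expression
`7 tr([U₀,V₀]²) + m((tr(U₀V₀))² − tr(U₀²) tr(V₀²))` is non-positive, where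
`U₀, V₀` are the traceless parts. -/
theorem stmt_13 {n m : ℕ} (hm : 2 ≤ m) (hmn : m ≤ n)
    (a u v : Matrix (Fin n) (Fin m) ℝ) (ha : a.rank = m)
    (hU : (u * aplus a)ᵀ = u * aplus a) (hV : (v * aplus a)ᵀ = v * aplus a)
    (U0 V0 : Matrix (Fin n) (Fin n) ℝ)
    (hU0 : U0 = u * aplus a - (Matrix.trace (u * aplus a) / (m : ℝ)) • (a * aplus a))
    (hV0 : V0 = v * aplus a - (Matrix.trace (v * aplus a) / (m : ℝ)) • (a * aplus a)) :
    7 * Matrix.trace ((U0 * V0 - V0 * U0) * (U0 * V0 - V0 * U0))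
      + (m : ℝ) * ((Matrix.trace (U0 * V0)) ^ 2
          - Matrix.trace (U0 * U0) * Matrix.trace (V0 * V0)) ≤ 0 := by
  have haap : (a * aplus a)ᵀ = a * aplus a := by
    simp only [aplus, ← Matrix.mul_assoc, Matrix.transpose_mul, Matrix.transpose_transpose,
      Matrix.transpose_nonsing_inv]
  have hU0s : U0ᵀ = U0 := by
    rw [hU0, Matrix.transpose_sub, Matrix.transpose_smul, hU, haap]
  have hV0s : V0ᵀ = V0 := by
    rw [hV0, Matrix.transpose_sub, Matrix.transpose_smul, hV, haap]
  set C := U0 * V0 - V0 * U0 with hC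
  have hCs : Cᵀ = -C := by
    rw [hC, Matrix.transpose_sub, Matrix.transpose_mul, Matrix.transpose_mul, hU0s, hV0s]
    abel
  -- trace of C² is nonpositive
  have h1 : Matrix.trace (C * C) ≤ 0 := by
    have : Matrix.trace (C * C) = -∑ i, ∑ j, (C i j) ^ 2 := by
      simp only [Matrix.trace, Matrix.diag, Matrix.mul_apply]
      rw [← Finset.sum_neg_distrib]
      refine Finset.sum_congr rfl fun i _ => ?_
      rw [← Finset.sum_neg_distrib]
      refine Finset.sum_congr rfl fun j _ => ?_
      have : C j i = -C i j := by
        rw [show C j i = Cᵀ i j from rfl, hCs]; rfl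
      rw [this]; ring
    rw [this]
    simp only [neg_nonpos]
    positivity
  -- Cauchy-Schwarz
  have h2 : (Matrix.trace (U0 * V0)) ^ 2 ≤
      Matrix.trace (U0 * U0) * Matrix.trace (V0 * V0) := by
    rw [trace_mul_symm U0 V0 hV0s, trace_mul_symm U0 U0 hU0s, trace_mul_symm V0 V0 hV0s]
    simp only [← Finset.sum_product', ← Finset.univ_product_univ]
    have := Finset.sum_mul_sq_le_sq_mul_sq (Finset.univ : Finset (Fin n × Fin n))
      (fun p => U0 p.1 p.2) (fun p => V0 p.1 p.2)
    simpa [pow_two] using this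
  have hm0 : (0:ℝ) ≤ (m:ℝ) := Nat.cast_nonneg m
  nlinarith [mul_nonneg hm0 (sub_nonneg.mpr h2)]
end
end

section
/- Let g ∈ Sym_+(m) and let h, k be symmetric m×m matrices, orthonormal with respect to the metric ⟨h,k⟩_g = (1/4) tr(h g^{-1} k g^{-1})√det(g). Then the sectional curvature K_g(h,k) = (1/16)[tr([g^{-1}h, g^{-1}k]²) + (m/4)(tr(g^{-1}h g^{-1}k))² − (m/4) tr((g^{-1}h)²) tr((g^{-1}k)²)]√det(g) is non-positive. -/
open Matrix

/-!
Put `P = g⁻¹`. The quadratic form `X ↦ tr (P X P Xᵀ)` is nonnegative: writing `P = Rᴴ R`, it is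
the squared Frobenius norm of `R X Rᴴ`. On symmetric matrices it is (up to the factor
`√det g / 4`) the Ebin inner product, so Cauchy–Schwarz gives
`tr (g⁻¹h g⁻¹k)² ≤ tr ((g⁻¹h)²) tr ((g⁻¹k)²)`. The commutator factors as
`[g⁻¹h, g⁻¹k] = P C` with `C = h P k - k P h` skew-symmetric, hence
`tr ([g⁻¹h, g⁻¹k]²) = tr (P C P C) = -tr (P C P Cᵀ) ≤ 0`.
-/

namespace Matrix

variable {n : Type*} [Fintype n] {P : Matrix n n ℝ}

open scoped MatrixOrder Matrix.Norms.L2Operator in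
theorem PosSemidef.trace_mul_mul_mul_transpose_nonneg (hP : P.PosSemidef) (X : Matrix n n ℝ) :
    0 ≤ trace (P * X * P * Xᵀ) := by
  classical
  obtain ⟨R, rfl⟩ := CStarAlgebra.nonneg_iff_eq_star_mul_self.mp hP.nonneg
  calc 0 ≤ trace (R * X * Rᴴ * (R * X * Rᴴ)ᴴ) :=
        (posSemidef_self_mul_conjTranspose _).trace_nonneg
    _ = trace (Rᴴ * (R * X * Rᴴ * (R * Xᵀ))) := by
        rw [trace_mul_comm Rᴴ]
        simp [Matrix.mul_assoc]
    _ = trace (star R * R * X * (star R * R) * Xᵀ) := by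
        simp only [star_eq_conjTranspose, Matrix.mul_assoc]

theorem PosSemidef.trace_mul_mul_mul_transpose_sq_le (hP : P.PosSemidef) (X Y : Matrix n n ℝ) :
    trace (P * X * P * Yᵀ) ^ 2 ≤ trace (P * X * P * Xᵀ) * trace (P * Y * P * Yᵀ) := by
  have hPt : Pᵀ = P := (isHermitian_iff_isSymm.mp hP.isHermitian).eq
  have hswap : trace (P * Y * P * Xᵀ) = trace (P * X * P * Yᵀ) := by
    rw [← trace_transpose]
    simp only [transpose_mul, transpose_transpose, hPt]
    rw [← Matrix.mul_assoc, ← Matrix.mul_assoc, trace_mul_comm]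
    simp only [Matrix.mul_assoc]
  have hdiscrim := discrim_le_zero (a := trace (P * Y * P * Yᵀ))
    (b := 2 * trace (P * X * P * Yᵀ)) (c := trace (P * X * P * Xᵀ)) fun t => by
      have := hP.trace_mul_mul_mul_transpose_nonneg (X + t • Y)
      simp only [transpose_add, transpose_smul, Matrix.mul_add, Matrix.add_mul, Matrix.mul_smul,
        Matrix.smul_mul, trace_add, trace_smul, smul_eq_mul, hswap] at this
      linarith
  rw [discrim] at hdiscrim
  nlinarith

theorem PosSemidef.trace_mul_mul_mul_nonpos_of_transpose_eq_neg (hP : P.PosSemidef)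
    {C : Matrix n n ℝ} (hC : Cᵀ = -C) : trace (P * C * P * C) ≤ 0 := by
  simpa [hC] using hP.trace_mul_mul_mul_transpose_nonneg C

theorem PosSemidef.trace_commutator_mul_self_nonpos (hP : P.PosSemidef) {h k : Matrix n n ℝ}
    (hh : hᵀ = h) (hk : kᵀ = k) :
    trace ((P * h * (P * k) - P * k * (P * h)) * (P * h * (P * k) - P * k * (P * h))) ≤ 0 := by
  have hPt : Pᵀ = P := (isHermitian_iff_isSymm.mp hP.isHermitian).eq
  have hfactor : P * h * (P * k) - P * k * (P * h) = P * (h * P * k - k * P * h) := by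
    simp only [Matrix.mul_sub, Matrix.mul_assoc]
  have hskew : (h * P * k - k * P * h)ᵀ = -(h * P * k - k * P * h) := by
    simp [transpose_mul, hh, hk, hPt, Matrix.mul_assoc]
  rw [hfactor, ← Matrix.mul_assoc]
  exact hP.trace_mul_mul_mul_nonpos_of_transpose_eq_neg hskew

end Matrix

theorem stmt_19_general {m : ℕ} (g h k : Matrix (Fin m) (Fin m) ℝ)
    (hg : g.PosDef) (hh : hᵀ = h) (hk : kᵀ = k) :
    (1 / 16) * (Matrix.trace
        ((g⁻¹ * h * (g⁻¹ * k) - g⁻¹ * k * (g⁻¹ * h)) *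
          (g⁻¹ * h * (g⁻¹ * k) - g⁻¹ * k * (g⁻¹ * h)))
      + ((m : ℝ) / 4) * (Matrix.trace (g⁻¹ * h * (g⁻¹ * k))) ^ 2
      - ((m : ℝ) / 4) * Matrix.trace (g⁻¹ * h * (g⁻¹ * h))
          * Matrix.trace (g⁻¹ * k * (g⁻¹ * k))) * Real.sqrt g.det ≤ 0 := by
  have hP : g⁻¹.PosSemidef := hg.inv.posSemidef
  have hcomm := hP.trace_commutator_mul_self_nonpos hh hk
  have hcs : trace (g⁻¹ * h * (g⁻¹ * k)) ^ 2
      ≤ trace (g⁻¹ * h * (g⁻¹ * h)) * trace (g⁻¹ * k * (g⁻¹ * k)) := by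
    simpa [hh, hk, Matrix.mul_assoc] using hP.trace_mul_mul_mul_transpose_sq_le h k
  have hm : (0 : ℝ) ≤ m / 4 := by positivity
  refine mul_nonpos_of_nonpos_of_nonneg ?_ (Real.sqrt_nonneg _)
  nlinarith [mul_le_mul_of_nonneg_left hcs hm]

/-- non-positivity of the sectional curvature of the
finite-dimensional Ebin metric `⟨h,k⟩_g = (1/4) tr(h g⁻¹ k g⁻¹)√det g` on
positive definite symmetric matrices, for orthonormal symmetric `h, k`. -/
theorem stmt_19 {m : ℕ} (g h k : Matrix (Fin m) (Fin m) ℝ)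
    (hg : g.PosDef) (hh : hᵀ = h) (hk : kᵀ = k)
    (h1 : (1 / 4) * Matrix.trace (h * g⁻¹ * h * g⁻¹) * Real.sqrt g.det = 1)
    (h2 : (1 / 4) * Matrix.trace (k * g⁻¹ * k * g⁻¹) * Real.sqrt g.det = 1)
    (h3 : (1 / 4) * Matrix.trace (h * g⁻¹ * k * g⁻¹) * Real.sqrt g.det = 0) :
    (1 / 16) * (Matrix.trace
        ((g⁻¹ * h * (g⁻¹ * k) - g⁻¹ * k * (g⁻¹ * h)) *
          (g⁻¹ * h * (g⁻¹ * k) - g⁻¹ * k * (g⁻¹ * h)))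
      + ((m : ℝ) / 4) * (Matrix.trace (g⁻¹ * h * (g⁻¹ * k))) ^ 2
      - ((m : ℝ) / 4) * Matrix.trace (g⁻¹ * h * (g⁻¹ * h))
          * Matrix.trace (g⁻¹ * k * (g⁻¹ * k))) * Real.sqrt g.det ≤ 0 :=
  stmt_19_general g h k hg hh hk
end
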